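/- If f : ¬N[sⁿ(0)] ⊢ (f)m̲ : ⊥ is derivable in AF2_⊥ (for Church numerals m̲, n̲ and an adequate set of equations), then n = m. -/

import Mathlib

/- Untyped λ-calculus with de Bruijn indices, head reduction, Church numerals. -/

inductive Lam : Type
  | var : ℕ → Lam
  | app : Lam → Lam → Lam
  | lam : Lam → Lam
deriving DecidableEq, Repr

namespace Lam

/-- Shift free variables `≥ c` up by 1. -/
def lift (c : ℕ) : Lam → Lam
  | var n => if n < c then var n else var (n + 1)
  | app s t => app (s.lift c) (t.lift c)
  | lam t => lam (t.lift (c + 1))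

/-- Push a substitution under a binder. -/
def up (σ : ℕ → Lam) : ℕ → Lam
  | 0 => var 0
  | n + 1 => (σ n).lift 0

/-- Capture-avoiding simultaneous substitution. -/
def subst (σ : ℕ → Lam) : Lam → Lam
  | var n => σ n
  | app s t => app (s.subst σ) (t.subst σ)
  | lam t => lam (t.subst (up σ))

/-- `t.subst0 u` is `t[u/0]`, the β-contractum substitution. -/
def subst0 (t u : Lam) : Lam :=
  t.subst (fun n => match n with | 0 => u | n + 1 => var n)

/-- `m` occurs free in the term. -/
def FreeIn (m : ℕ) : Lam → Prop
  | var n => n = m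
  | app s t => s.FreeIn m ∨ t.FreeIn m
  | lam t => t.FreeIn (m + 1)

/-- A closed λ-term. -/
def Closed (t : Lam) : Prop := ∀ m, ¬ t.FreeIn m

end Lam

/-- One-step β-reduction (anywhere in the term). -/
inductive Beta : Lam → Lam → Prop
  | beta (t u) : Beta (.app (.lam t) u) (t.subst0 u)
  | appL {s s'} (t) : Beta s s' → Beta (.app s t) (.app s' t)
  | appR {t t'} (s) : Beta t t' → Beta (.app s t) (.app s t')
  | lam {t t'} : Beta t t' → Beta (.lam t) (.lam t')

/-- β-equivalence `≃β`. -/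
def BetaEq : Lam → Lam → Prop := Relation.EqvGen Beta

/-- A term in (β-)normal form. -/
def NormalForm (t : Lam) : Prop := ∀ u, ¬ Beta t u

/-- One step of head reduction: reduce the head redex. -/
inductive HStep : Lam → Lam → Prop
  | beta (t u) : HStep (.app (.lam t) u) (t.subst0 u)
  | lam {t t'} : HStep t t' → HStep (.lam t) (.lam t')
  | app {t t'} (u) : HStep t t' → (∀ s, t ≠ .lam s) → HStep (.app t u) (.app t' u)

/-- `HRedN k u v` : `u ≻ v` by a head reduction of length `h(u,v) = k`. -/
inductive HRedN : ℕ → Lam → Lam → Prop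
  | refl (t) : HRedN 0 t t
  | step {k t u v} : HStep t u → HRedN k u v → HRedN (k + 1) t v

/-- `u ≻ v` : `v` is obtained from `u` by head reduction. -/
def HRed (t u : Lam) : Prop := ∃ k, HRedN k t u

/-- Head normal form: no head redex. -/
def HeadNormal (t : Lam) : Prop := ∀ u, ¬ HStep t u

/-- Solvable: the head reduction terminates. -/
def Solvable (t : Lam) : Prop := ∃ v, HRed t v ∧ HeadNormal v

/-- `(t)u₁…uₙ` : iterated application. -/
def appList : Lam → List Lam → Lam
  | t, [] => t
  | t, u :: us => appList (t.app u) us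

/-- `(f)ⁿ x` with `x = var 1`, `f = var 0`. -/
def churchBody : ℕ → Lam
  | 0 => .var 1
  | n + 1 => .app (.var 0) (churchBody n)

/-- Church numeral `n̲ = λx λf (f)ⁿ x`. -/
def church (n : ℕ) : Lam := .lam (.lam (churchBody n))

/-- `0̲ = λx λf x`. -/
def czero : Lam := .lam (.lam (.var 1))

/-- `s̲ = λn λx λf (f)((n)x)f`. -/
def csucc : Lam := .lam (.lam (.lam (.app (.var 0) (.app (.app (.var 2) (.var 1)) (.var 0)))))

/-- `(s̲)ⁿ 0̲`. -/
def succIter : ℕ → Lam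
  | 0 => czero
  | n + 1 => .app csucc (succIter n)

/-- `G = λx λy (x) λz (y)(s̲)z`. -/
def Gop : Lam := .lam (.lam (.app (.var 1) (.lam (.app (.var 1) (.app csucc (.var 0))))))

/-- `δ = λf (f)0̲`. -/
def deltaOp : Lam := .lam (.app (.var 0) czero)

/-- `T₁ = λn ((n)δ)G`. -/
def T1 : Lam := .lam (.app (.app (.var 0) deltaOp) Gop)

/-- `F = λx λy (x)(s̲)y`. -/
def Fop : Lam := .lam (.lam (.app (.var 1) (.app csucc (.var 0))))

/-- `T₂ = λn λf (((n)f)F)0̲`. -/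
def T2 : Lam := .lam (.lam (.app (.app (.app (.var 1) (.var 0)) Fop) czero))

/-- `θ₀ = λx λf λz (x)(λd z)(λx x)`. -/
def theta0 : Lam := .lam (.lam (.lam (.app (.app (.var 2) (.lam (.var 1))) (.lam (.var 0)))))

/-- `T` is a storage operator for the integers (the fixed variable `f` is `var 0`). -/
def IsStorage (T : Lam) : Prop :=
  ∀ n : ℕ, ∃ τ : Lam, BetaEq τ (church n) ∧
    ∀ θ : Lam, BetaEq θ (church n) →
      ∃ σ : ℕ → Lam, HRed (.app (.app T θ) (.var 0)) (.app (.var 0) (τ.subst σ))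

/- AF2 : second-order functional arithmetic over the language {0, s}.
   First-order variables are de Bruijn indices; predicate variables are named
   by a `Bool` (true = ⊥-variable of AF2⊥) and a number, each with an arity. -/

inductive Tm : Type
  | var : ℕ → Tm
  | zero : Tm
  | succ : Tm → Tm
deriving DecidableEq

namespace Tm

def liftBy (c m : ℕ) : Tm → Tm
  | var n => if n < c then var n else var (n + m)
  | zero => zero
  | succ t => succ (t.liftBy c m)

def up (σ : ℕ → Tm) : ℕ → Tm
  | 0 => var 0
  | n + 1 => (σ n).liftBy 0 1

def subst (σ : ℕ → Tm) : Tm → Tm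
  | var n => σ n
  | zero => zero
  | succ t => succ (t.subst σ)

end Tm

/-- The first-order term `sⁿ(0)`. -/
def snum : ℕ → Tm
  | 0 => .zero
  | n + 1 => .succ (snum n)

/-- Second-order formulas.  `pvar b X args` is the atomic formula `X(args)`,
`b = true` marking the special ⊥-variables of AF2⊥; `all1` binds a first-order
de Bruijn variable; `all2 b X k A` is `∀X A` for the `k`-ary predicate variable `(b,X)`. -/
inductive Fml : Type
  | pvar (b : Bool) (X : ℕ) (args : List Tm)
  | arr (A B : Fml)
  | all1 (A : Fml)
  | all2 (b : Bool) (X : ℕ) (k : ℕ) (A : Fml)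
deriving DecidableEq

/-- Absurdity `⊥ := ∀X X` (for a 0-ary predicate variable `X`). -/
def botF : Fml := .all2 false 0 0 (.pvar false 0 [])

/-- `¬A := A → ⊥`. -/
def negF (A : Fml) : Fml := A.arr botF

namespace Fml

/-- Shift first-order variables `≥ c` by `m`. -/
def lift1By (c m : ℕ) : Fml → Fml
  | pvar b X args => pvar b X (args.map (Tm.liftBy c m))
  | arr A B => arr (A.lift1By c m) (B.lift1By c m)
  | all1 A => all1 (A.lift1By (c + 1) m)
  | all2 b X k A => all2 b X k (A.lift1By c m)

/-- First-order substitution in a formula. -/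
def subst1 (σ : ℕ → Tm) : Fml → Fml
  | pvar b X args => pvar b X (args.map (Tm.subst σ))
  | arr A B => arr (A.subst1 σ) (B.subst1 σ)
  | all1 A => all1 (A.subst1 (Tm.up σ))
  | all2 b X k A => all2 b X k (A.subst1 σ)

/-- `A[u/x]` for the first-order variable `0`. -/
def substTop (u : Tm) (A : Fml) : Fml :=
  A.subst1 (fun n => match n with | 0 => u | n + 1 => Tm.var n)

/-- The predicate variable `(b, X)` occurs free. -/
def fv2 (b : Bool) (X : ℕ) : Fml → Prop
  | pvar b' X' _ => b = b' ∧ X = X'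
  | arr A B => A.fv2 b X ∨ B.fv2 b X
  | all1 A => A.fv2 b X
  | all2 b' X' _ A => ¬(b = b' ∧ X = X') ∧ A.fv2 b X

/-- Instantiate the `k` argument slots (first-order variables `0,…,k-1`) of `G` by `args`. -/
def instArgs (k : ℕ) (G : Fml) (args : List Tm) : Fml :=
  G.subst1 (fun n => if n < k then args.getD n Tm.zero else Tm.var (n - k))

/-- `A[G/X]` : substitution of the formula `G` (with argument slots `0,…,k-1`)
for the `k`-ary predicate variable `(b, X)`; `d` is the number of first-order
binders already crossed. -/
def psubst (b : Bool) (X : ℕ) (k : ℕ) (G : Fml) : ℕ → Fml → Fml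
  | d, pvar b' X' args =>
      if b = b' ∧ X = X' then instArgs k (G.lift1By k d) args else pvar b' X' args
  | d, arr A B => arr (psubst b X k G d A) (psubst b X k G d B)
  | d, all1 A => all1 (psubst b X k G (d + 1) A)
  | d, all2 b' X' m A =>
      if b = b' ∧ X = X' then all2 b' X' m A else all2 b' X' m (psubst b X k G d A)

end Fml

/-- ⊥-types : formulas ending with `⊥` or with an atom `X_⊥(t̄)`. -/
inductive IsBotFml : Fml → Prop
  | bot : IsBotFml botF
  | pvar (X args) : IsBotFml (.pvar true X args)
  | arr (A) {B} : IsBotFml B → IsBotFml (.arr A B)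
  | all1 {A} : IsBotFml A → IsBotFml (.all1 A)
  | all2 (b X k) {A} : IsBotFml A → IsBotFml (.all2 b X k A)

/-- Equational consequence of a set `E` of equations. -/
inductive EqCns (E : Set (Tm × Tm)) : Tm → Tm → Prop
  | ax {u v : Tm} (σ : ℕ → Tm) : (u, v) ∈ E → EqCns E (u.subst σ) (v.subst σ)
  | refl (t) : EqCns E t t
  | symm {u v} : EqCns E u v → EqCns E v u
  | trans {u v w} : EqCns E u v → EqCns E v w → EqCns E u w
  | succ {u v} : EqCns E u v → EqCns E u.succ v.succ

/-- `E` is adequate with the type of integers. -/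
def Adequate (E : Set (Tm × Tm)) : Prop :=
  (∀ a, ¬ EqCns E (Tm.succ a) Tm.zero) ∧
  (∀ a b, EqCns E (Tm.succ a) (Tm.succ b) → EqCns E a b)

/-- The AF2 type system (Curry style, de Bruijn contexts, equational rule for `E`). -/
inductive DerA (E : Set (Tm × Tm)) : List Fml → Lam → Fml → Prop
  | var (Γ n A) : Γ[n]? = some A → DerA E Γ (.var n) A
  | lamI {Γ A t B} : DerA E (A :: Γ) t B → DerA E Γ (.lam t) (.arr A B)
  | appE {Γ u v A B} : DerA E Γ u (.arr A B) → DerA E Γ v A → DerA E Γ (.app u v) B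
  | all1I {Γ t A} : DerA E (Γ.map (Fml.lift1By 0 1)) t A → DerA E Γ t (.all1 A)
  | all1E {Γ t A} (u) : DerA E Γ t (.all1 A) → DerA E Γ t (A.substTop u)
  | all2I {Γ t A} (b X k) : DerA E Γ t A → (∀ B ∈ Γ, ¬ B.fv2 b X) →
      DerA E Γ t (.all2 b X k A)
  | all2E {Γ t b X k A} (G) : DerA E Γ t (.all2 b X k A) →
      DerA E Γ t (Fml.psubst b X k G 0 A)
  | eqr {Γ : List Fml} {t : Lam} {A : Fml} {u v : Tm} : DerA E Γ t (A.substTop u) → EqCns E u v →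
      DerA E Γ t (A.substTop v)

/-- The AF2⊥ type system: as AF2, but a ⊥-variable may only be instantiated
by a ⊥-type. -/
inductive DerB (E : Set (Tm × Tm)) : List Fml → Lam → Fml → Prop
  | var (Γ n A) : Γ[n]? = some A → DerB E Γ (.var n) A
  | lamI {Γ A t B} : DerB E (A :: Γ) t B → DerB E Γ (.lam t) (.arr A B)
  | appE {Γ u v A B} : DerB E Γ u (.arr A B) → DerB E Γ v A → DerB E Γ (.app u v) B
  | all1I {Γ t A} : DerB E (Γ.map (Fml.lift1By 0 1)) t A → DerB E Γ t (.all1 A)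
  | all1E {Γ t A} (u) : DerB E Γ t (.all1 A) → DerB E Γ t (A.substTop u)
  | all2I {Γ t A} (b X k) : DerB E Γ t A → (∀ B ∈ Γ, ¬ B.fv2 b X) →
      DerB E Γ t (.all2 b X k A)
  | all2E {Γ t b X k A} (G) : DerB E Γ t (.all2 b X k A) →
      (b = true → IsBotFml G) → DerB E Γ t (Fml.psubst b X k G 0 A)
  | eqr {Γ : List Fml} {t : Lam} {A : Fml} {u v : Tm} : DerB E Γ t (A.substTop u) → EqCns E u v →
      DerB E Γ t (A.substTop v)

/-- `N[t] = ∀X{X(0), ∀y(X(y)→X(sy)) → X(t)}`, with `b` choosing the kind of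
the quantified (unary) predicate variable. -/
def NtyGen (b : Bool) (t : Tm) : Fml :=
  .all2 b 0 1 (.arr (.pvar b 0 [Tm.zero])
    (.arr (.all1 (.arr (.pvar b 0 [Tm.var 0]) (.pvar b 0 [Tm.succ (Tm.var 0)])))
      (.pvar b 0 [t])))

/-- The type `N[t]` of integers. -/
def Nty (t : Tm) : Fml := NtyGen false t

/-- `N^⊥[t]`, quantifying over a ⊥-variable. -/
def Nbot (t : Tm) : Fml := NtyGen true t

/-- The simple Gödel translation `N*[t] = ∀X{¬X(0), ∀y(¬X(y)→¬X(sy)) → ¬X(t)}`. -/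
def Nstar (t : Tm) : Fml :=
  .all2 false 0 1 (.arr (negF (.pvar false 0 [Tm.zero]))
    (.arr (.all1 (.arr (negF (.pvar false 0 [Tm.var 0]))
        (negF (.pvar false 0 [Tm.succ (Tm.var 0)]))))
      (negF (.pvar false 0 [t]))))

/-- `∀x{N*[x] → ¬¬N[x]}`. -/
def specStar : Fml := .all1 ((Nstar (Tm.var 0)).arr (negF (negF (Nty (Tm.var 0)))))

/-- `∀x{N^⊥[x] → ¬¬N[x]}`. -/
def specBot : Fml := .all1 ((Nbot (Tm.var 0)).arr (negF (negF (Nty (Tm.var 0)))))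


/-!
By the generation lemma, a derivation of `t : B` is the rule for the head constructor of `t`
followed by a chain of `∀`-rules and equational steps acting on the type alone (`TypeStep`). An
elimination in such a chain undoes an earlier introduction, so on the underlying core it is a
first-order or a predicate substitution, and predicate variables free in the context are never
substituted. Since `¬N[sⁿ0]` is closed, the argument `m̲ = λxλf (f)ᵐx` of `f` gets a type
`E`-equal to `N[sⁿ0]`. Following shapes along the chains, `x` and `(f)ᵏx` have atomic types and
the type of `f` is shaped like an initial part of `∀y(X(y) → X(sy))`.

The predicate substitution of `AF2` may capture bound predicate variables, which makes the system
unsound for the usual models. The cores met here contain no second-order quantifier, though, and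
on them a graded model is preserved: grade `g` stands for `(f)ᵍx`, and `f` acts as `g ↦ g + 1`.
So `m̲` realizes `X(0) → ∀y(X(y) → X(sy)) → X(sⁿ0)` at grade `m`, and reading `X(k)` as "grade
`k`" gives `n = m`; adequacy of `E` makes equations sound for this reading.
-/
namespace Tm

def eval (φ : ℕ → ℕ) : Tm → ℕ
  | var n => φ n
  | zero => 0
  | succ t => t.eval φ + 1

def shift (c k i : ℕ) : Tm := if i < c then var i else var (i + k)

/-- The substitution behind `Fml.substTop u`. -/
def top (u : Tm) : ℕ → Tm
  | 0 => u
  | n + 1 => var n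

def upN : ℕ → (ℕ → Tm) → ℕ → Tm
  | 0, σ => σ
  | d + 1, σ => up (upN d σ)

theorem liftBy_eq_subst (t : Tm) (c k : ℕ) : t.liftBy c k = t.subst (shift c k) := by
  induction t with
  | var n => rfl
  | zero => rfl
  | succ t ih => simp [liftBy, subst, ih]

theorem subst_subst (t : Tm) (σ τ : ℕ → Tm) :
    (t.subst σ).subst τ = t.subst (fun i => (σ i).subst τ) := by
  induction t with
  | var n => rfl
  | zero => rfl
  | succ t ih => simp [subst, ih]

theorem eval_subst (φ : ℕ → ℕ) (σ : ℕ → Tm) (t : Tm) :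
    (t.subst σ).eval φ = t.eval (fun i => (σ i).eval φ) := by
  induction t with
  | var n => rfl
  | zero => rfl
  | succ t ih => simp [subst, eval, ih]

theorem liftBy_zero (t : Tm) (c : ℕ) : t.liftBy c 0 = t := by
  induction t with
  | var n => simp [liftBy]
  | zero => rfl
  | succ t ih => simp [liftBy, ih]

theorem liftBy_liftBy (t : Tm) (c a b : ℕ) : (t.liftBy c a).liftBy c b = t.liftBy c (a + b) := by
  induction t with
  | var n =>
    by_cases h : n < c
    · simp [liftBy, h]
    · simp [liftBy, h, show ¬ n + a < c by omega, Nat.add_assoc]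
  | zero => rfl
  | succ t ih => simp [liftBy, ih]

theorem up_shift (c k : ℕ) : up (shift c k) = shift (c + 1) k := by
  funext i
  cases i with
  | zero => simp [up, shift]
  | succ i => by_cases h : i < c <;> simp [up, shift, liftBy, h]; omega

theorem upN_of_lt {d i : ℕ} (σ : ℕ → Tm) (h : i < d) : upN d σ i = var i := by
  induction d generalizing i with
  | zero => omega
  | succ d ih =>
    cases i with
    | zero => rfl
    | succ i => simp [upN, up, ih (Nat.lt_of_succ_lt_succ h), liftBy]

theorem upN_of_le {d i : ℕ} (σ : ℕ → Tm) (h : d ≤ i) : upN d σ i = (σ (i - d)).liftBy 0 d := by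
  induction d generalizing i with
  | zero => simp [upN, liftBy_zero]
  | succ d ih =>
    obtain ⟨i, rfl⟩ : ∃ i', i = i' + 1 := ⟨i - 1, by omega⟩
    simp [upN, up, ih (show d ≤ i by omega), liftBy_liftBy]

theorem liftBy_subst_upN (t : Tm) {c N d : ℕ} (u : Tm) (hc : c ≤ d) (hd : d < c + N) :
    (t.liftBy c N).subst (upN d (top u)) = t.liftBy c (N - 1) := by
  induction t with
  | var n =>
    by_cases hn : n < c
    · simp [liftBy, hn, subst, upN_of_lt _ (show n < d by omega)]
    · obtain ⟨e, he⟩ : ∃ e, n + N - d = e + 1 := ⟨n + N - d - 1, by omega⟩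
      simp only [liftBy, hn, if_false, subst, upN_of_le _ (show d ≤ n + N by omega), he, top]
      simp only [Nat.not_lt_zero, if_false]
      congr 1
      omega
  | zero => rfl
  | succ t ih => simp [liftBy, subst, ih]

theorem subst_snum (σ : ℕ → Tm) (a : ℕ) : (snum a).subst σ = snum a := by
  induction a with
  | zero => rfl
  | succ a ih => simp [snum, subst, ih]

theorem eval_snum (φ : ℕ → ℕ) (a : ℕ) : (snum a).eval φ = a := by
  induction a with
  | zero => rfl
  | succ a ih => simp [snum, eval, ih]

theorem subst_snum_eval (φ : ℕ → ℕ) (t : Tm) : t.subst (fun i => snum (φ i)) = snum (t.eval φ) := by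
  induction t with
  | var n => rfl
  | zero => rfl
  | succ t ih => simp [subst, eval, snum, ih]

end Tm

namespace EqCns

variable {E : Set (Tm × Tm)}

theorem subst {u v : Tm} (h : EqCns E u v) (σ : ℕ → Tm) : EqCns E (u.subst σ) (v.subst σ) := by
  induction h with
  | ax τ hmem => rw [Tm.subst_subst, Tm.subst_subst]; exact .ax _ hmem
  | refl t => exact .refl _
  | symm _ ih => exact ih.symm
  | trans _ _ ih₁ ih₂ => exact ih₁.trans ih₂
  | succ _ ih => exact ih.succ

theorem subst_congr {σ τ : ℕ → Tm} (h : ∀ i, EqCns E (σ i) (τ i)) (t : Tm) :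
    EqCns E (t.subst σ) (t.subst τ) := by
  induction t with
  | var n => exact h n
  | zero => exact .refl _
  | succ t ih => exact ih.succ

theorem liftBy {u v : Tm} (h : EqCns E u v) (c k : ℕ) : EqCns E (u.liftBy c k) (v.liftBy c k) := by
  rw [Tm.liftBy_eq_subst, Tm.liftBy_eq_subst]
  exact h.subst _

end EqCns

namespace Adequate

variable {E : Set (Tm × Tm)}

theorem snum_inj (hE : Adequate E) {a b : ℕ} (h : EqCns E (snum a) (snum b)) : a = b := by
  induction a generalizing b with
  | zero =>
    cases b with
    | zero => rfl
    | succ b => exact absurd h.symm (hE.1 _)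
  | succ a ih =>
    cases b with
    | zero => exact absurd h (hE.1 _)
    | succ b => exact congrArg Nat.succ (ih (hE.2 _ _ h))

/-- Instantiating the variables by numerals turns an `E`-equation into one between numerals. -/
theorem eval_eq (hE : Adequate E) {u v : Tm} (h : EqCns E u v) (φ : ℕ → ℕ) :
    u.eval φ = v.eval φ := by
  have := h.subst (fun i => snum (φ i))
  rw [Tm.subst_snum_eval, Tm.subst_snum_eval] at this
  exact hE.snum_inj this

end Adequate

namespace Fml

theorem lift1By_eq_subst1 (A : Fml) (c k : ℕ) : A.lift1By c k = A.subst1 (Tm.shift c k) := by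
  induction A generalizing c with
  | pvar b X args => simp [lift1By, subst1, Tm.liftBy_eq_subst]
  | arr A₁ A₂ ih₁ ih₂ => simp [lift1By, subst1, ih₁, ih₂]
  | all1 A ih => simp [lift1By, subst1, ih, Tm.up_shift]
  | all2 b X k' A ih => simp [lift1By, subst1, ih]

theorem lift1By_zero (A : Fml) (c : ℕ) : A.lift1By c 0 = A := by
  induction A generalizing c with
  | pvar b X args => simp [lift1By, List.map_id'' (Tm.liftBy_zero · c)]
  | arr A₁ A₂ ih₁ ih₂ => simp [lift1By, ih₁, ih₂]
  | all1 A ih => simp [lift1By, ih]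
  | all2 b X k A ih => simp [lift1By, ih]

theorem lift1By_lift1By (A : Fml) (c a b : ℕ) :
    (A.lift1By c a).lift1By c b = A.lift1By c (a + b) := by
  induction A generalizing c with
  | pvar b X args => simp [lift1By, Function.comp_def, Tm.liftBy_liftBy]
  | arr A₁ A₂ ih₁ ih₂ => simp [lift1By, ih₁, ih₂]
  | all1 A ih => simp [lift1By, ih]
  | all2 b X k A ih => simp [lift1By, ih]

theorem subst1_lift1By_upN (A : Fml) {c N d : ℕ} (u : Tm) (hc : c ≤ d) (hd : d < c + N) :
    (A.lift1By c N).subst1 (Tm.upN d (Tm.top u)) = A.lift1By c (N - 1) := by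
  induction A generalizing c d with
  | pvar b X args =>
    simp [lift1By, subst1, Function.comp_def, Tm.liftBy_subst_upN _ u hc hd]
  | arr A₁ A₂ ih₁ ih₂ => simp [lift1By, subst1, ih₁ hc hd, ih₂ hc hd]
  | all1 A ih =>
    simp only [lift1By, subst1]
    exact congrArg all1 (ih (c := c + 1) (d := d + 1) (by omega) (by omega))
  | all2 b X k A ih => simp [lift1By, subst1, ih hc hd]

theorem fv2_subst1 (A : Fml) (σ : ℕ → Tm) (b : Bool) (X : ℕ) :
    (A.subst1 σ).fv2 b X ↔ A.fv2 b X := by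
  induction A generalizing σ <;> simp [subst1, fv2, *]

theorem fv2_lift1By (A : Fml) (c k : ℕ) (b : Bool) (X : ℕ) :
    (A.lift1By c k).fv2 b X ↔ A.fv2 b X := by
  rw [lift1By_eq_subst1, fv2_subst1]

theorem psubst_of_not_fv2 {A : Fml} {b : Bool} {X : ℕ} (h : ¬ A.fv2 b X) (k : ℕ) (G : Fml)
    (d : ℕ) : psubst b X k G d A = A := by
  induction A generalizing d with
  | pvar b' X' args => simp_all [psubst, fv2]
  | arr A₁ A₂ ih₁ ih₂ =>
    simp only [fv2, not_or] at h
    simp [psubst, ih₁ h.1, ih₂ h.2]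
  | all1 A ih => simp [psubst, ih h]
  | all2 b' X' k' A ih =>
    by_cases hc : b = b' ∧ X = X'
    · simp [psubst, hc]
    · simp [psubst, hc, ih (fun hA => h ⟨hc, hA⟩)]

def IsForall : Fml → Prop
  | all1 _ => True
  | all2 .. => True
  | _ => False

end Fml

def fvC (Γ : List Fml) (b : Bool) (X : ℕ) : Prop := ∃ C ∈ Γ, C.fv2 b X

def liftCtx (j : ℕ) (Γ : List Fml) : List Fml := Γ.map (Fml.lift1By 0 j)

theorem liftCtx_zero (Γ : List Fml) : liftCtx 0 Γ = Γ := by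
  simp [liftCtx, List.map_id'' (Fml.lift1By_zero · 0)]

theorem map_liftCtx (j : ℕ) (Γ : List Fml) :
    (liftCtx j Γ).map (Fml.lift1By 0 1) = liftCtx (j + 1) Γ := by
  simp [liftCtx, Function.comp_def, Fml.lift1By_lift1By]

theorem List.Forall₂.trans_of {α : Type*} {R : α → α → Prop} (hR : ∀ a b c, R a b → R b c → R a c)
    {l₁ l₂ l₃ : List α} (h₁ : List.Forall₂ R l₁ l₂) (h₂ : List.Forall₂ R l₂ l₃) :
    List.Forall₂ R l₁ l₃ := by
  induction h₁ generalizing l₃ with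
  | nil => cases h₂; exact .nil
  | cons h _ ih => cases h₂ with | cons h' t' => exact .cons (hR _ _ _ h h') (ih t')

namespace Fml

def ArgEquiv (E : Set (Tm × Tm)) : Fml → Fml → Prop
  | pvar b X args, pvar b' X' args' => b = b' ∧ X = X' ∧ List.Forall₂ (EqCns E) args args'
  | arr A B, arr A' B' => ArgEquiv E A A' ∧ ArgEquiv E B B'
  | all1 A, all1 A' => ArgEquiv E A A'
  | all2 b X k A, all2 b' X' k' A' => b = b' ∧ X = X' ∧ k = k' ∧ ArgEquiv E A A'
  | _, _ => False

/-- `B` arises from `A` by replacing atoms with arbitrary formulas. -/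
def Prefix : Fml → Fml → Prop
  | pvar .., _ => True
  | arr A B, arr A' B' => Prefix A A' ∧ Prefix B B'
  | all1 A, all1 A' => Prefix A A'
  | all2 b X k A, all2 b' X' k' A' => b = b' ∧ X = X' ∧ k = k' ∧ Prefix A A'
  | _, _ => False

namespace ArgEquiv

variable {E : Set (Tm × Tm)}

theorem refl (A : Fml) : ArgEquiv E A A := by
  induction A with
  | pvar b X args => exact ⟨rfl, rfl, List.forall₂_same.2 fun t _ => .refl t⟩
  | arr A₁ A₂ ih₁ ih₂ => exact ⟨ih₁, ih₂⟩
  | all1 A ih => exact ih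
  | all2 b X k A ih => exact ⟨rfl, rfl, rfl, ih⟩

theorem symm {A B : Fml} (h : ArgEquiv E A B) : ArgEquiv E B A := by
  induction A generalizing B with
  | pvar b X args =>
    cases B <;> try exact h.elim
    obtain ⟨rfl, rfl, h⟩ := h
    exact ⟨rfl, rfl, List.Forall₂.flip (h.imp fun _ _ => EqCns.symm)⟩
  | arr A₁ A₂ ih₁ ih₂ =>
    cases B <;> try exact h.elim
    exact ⟨ih₁ h.1, ih₂ h.2⟩
  | all1 A ih =>
    cases B <;> try exact h.elim
    exact ih h
  | all2 b X k A ih =>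
    cases B <;> try exact h.elim
    obtain ⟨rfl, rfl, rfl, h⟩ := h
    exact ⟨rfl, rfl, rfl, ih h⟩

theorem trans {A B C : Fml} (h₁ : ArgEquiv E A B) (h₂ : ArgEquiv E B C) : ArgEquiv E A C := by
  induction A generalizing B C with
  | pvar b X args =>
    cases B <;> try exact h₁.elim
    cases C <;> try exact h₂.elim
    obtain ⟨rfl, rfl, h₁⟩ := h₁
    obtain ⟨rfl, rfl, h₂⟩ := h₂
    exact ⟨rfl, rfl, h₁.trans_of (R := EqCns E) (fun _ _ _ => EqCns.trans) h₂⟩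
  | arr A₁ A₂ ih₁ ih₂ =>
    cases B <;> try exact h₁.elim
    cases C <;> try exact h₂.elim
    exact ⟨ih₁ h₁.1 h₂.1, ih₂ h₁.2 h₂.2⟩
  | all1 A ih =>
    cases B <;> try exact h₁.elim
    cases C <;> try exact h₂.elim
    exact ih h₁ h₂
  | all2 b X k A ih =>
    cases B <;> try exact h₁.elim
    cases C <;> try exact h₂.elim
    obtain ⟨rfl, rfl, rfl, h₁⟩ := h₁
    obtain ⟨rfl, rfl, rfl, h₂⟩ := h₂
    exact ⟨rfl, rfl, rfl, ih h₁ h₂⟩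

theorem subst1 {A B : Fml} (h : ArgEquiv E A B) (σ : ℕ → Tm) :
    ArgEquiv E (A.subst1 σ) (B.subst1 σ) := by
  induction A generalizing B σ with
  | pvar b X args =>
    cases B <;> try exact h.elim
    obtain ⟨rfl, rfl, h⟩ := h
    exact ⟨rfl, rfl, List.forall₂_map_left_iff.2 (List.forall₂_map_right_iff.2
      (h.imp fun _ _ h => h.subst σ))⟩
  | arr A₁ A₂ ih₁ ih₂ =>
    cases B <;> try exact h.elim
    exact ⟨ih₁ h.1 σ, ih₂ h.2 σ⟩
  | all1 A ih =>
    cases B <;> try exact h.elim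
    exact ih h _
  | all2 b X k A ih =>
    cases B <;> try exact h.elim
    obtain ⟨rfl, rfl, rfl, h⟩ := h
    exact ⟨rfl, rfl, rfl, ih h σ⟩

theorem subst1_congr {σ τ : ℕ → Tm} (h : ∀ i, EqCns E (σ i) (τ i)) (A : Fml) :
    ArgEquiv E (A.subst1 σ) (A.subst1 τ) := by
  induction A generalizing σ τ with
  | pvar b X args =>
    exact ⟨rfl, rfl, List.forall₂_map_left_iff.2 (List.forall₂_map_right_iff.2
      (List.forall₂_same.2 fun t _ => EqCns.subst_congr h t))⟩
  | arr A₁ A₂ ih₁ ih₂ => exact ⟨ih₁ h, ih₂ h⟩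
  | all1 A ih =>
    refine ih fun i => ?_
    cases i with
    | zero => exact .refl _
    | succ i => exact (h i).liftBy 0 1
  | all2 b X k A ih => exact ⟨rfl, rfl, rfl, ih h⟩

theorem substTop {u v : Tm} (h : EqCns E u v) (A : Fml) :
    ArgEquiv E (A.substTop u) (A.substTop v) :=
  subst1_congr (fun i => by cases i <;> first | exact h | exact .refl _) A

theorem fv2_iff {A B : Fml} (h : ArgEquiv E A B) (b : Bool) (X : ℕ) : A.fv2 b X ↔ B.fv2 b X := by
  induction A generalizing B with
  | pvar b' X' args =>
    cases B <;> try exact h.elim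
    obtain ⟨rfl, rfl, -⟩ := h
    rfl
  | arr A₁ A₂ ih₁ ih₂ =>
    cases B <;> try exact h.elim
    simp [fv2, ih₁ h.1, ih₂ h.2]
  | all1 A ih =>
    cases B <;> try exact h.elim
    simpa only [fv2] using ih h
  | all2 b' X' k A ih =>
    cases B <;> try exact h.elim
    obtain ⟨rfl, rfl, rfl, h⟩ := h
    simp [fv2, ih h]

theorem toPrefix {A B : Fml} (h : ArgEquiv E A B) : Prefix A B := by
  induction A generalizing B with
  | pvar => trivial
  | arr A₁ A₂ ih₁ ih₂ =>
    cases B <;> try exact h.elim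
    exact ⟨ih₁ h.1, ih₂ h.2⟩
  | all1 A ih =>
    cases B <;> try exact h.elim
    exact ih h
  | all2 b X k A ih =>
    cases B <;> try exact h.elim
    obtain ⟨rfl, rfl, rfl, h⟩ := h
    exact ⟨rfl, rfl, rfl, ih h⟩

end ArgEquiv

namespace Prefix

theorem refl (A : Fml) : Prefix A A := by
  induction A with
  | pvar => trivial
  | arr A₁ A₂ ih₁ ih₂ => exact ⟨ih₁, ih₂⟩
  | all1 A ih => exact ih
  | all2 b X k A ih => exact ⟨rfl, rfl, rfl, ih⟩

theorem trans {A B C : Fml} (h₁ : Prefix A B) (h₂ : Prefix B C) : Prefix A C := by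
  induction A generalizing B C with
  | pvar => trivial
  | arr A₁ A₂ ih₁ ih₂ =>
    cases B <;> try exact h₁.elim
    cases C <;> try exact h₂.elim
    exact ⟨ih₁ h₁.1 h₂.1, ih₂ h₁.2 h₂.2⟩
  | all1 A ih =>
    cases B <;> try exact h₁.elim
    cases C <;> try exact h₂.elim
    exact ih h₁ h₂
  | all2 b X k A ih =>
    cases B <;> try exact h₁.elim
    cases C <;> try exact h₂.elim
    obtain ⟨rfl, rfl, rfl, h₁⟩ := h₁
    obtain ⟨rfl, rfl, rfl, h₂⟩ := h₂
    exact ⟨rfl, rfl, rfl, ih h₁ h₂⟩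

theorem subst1 (A : Fml) (σ : ℕ → Tm) : Prefix A (A.subst1 σ) := by
  induction A generalizing σ with
  | pvar => trivial
  | arr A₁ A₂ ih₁ ih₂ => exact ⟨ih₁ σ, ih₂ σ⟩
  | all1 A ih => exact ih _
  | all2 b X k A ih => exact ⟨rfl, rfl, rfl, ih σ⟩

theorem psubst (A : Fml) (b : Bool) (X k : ℕ) (G : Fml) (d : ℕ) :
    Prefix A (Fml.psubst b X k G d A) := by
  induction A generalizing d with
  | pvar => trivial
  | arr A₁ A₂ ih₁ ih₂ => exact ⟨ih₁ d, ih₂ d⟩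
  | all1 A ih => exact ih (d + 1)
  | all2 b' X' k' A ih =>
    by_cases hc : b = b' ∧ X = X'
    · simpa [Fml.psubst, hc] using refl (all2 b' X' k' A)
    · simp only [Fml.psubst, hc, if_false]
      exact ⟨rfl, rfl, rfl, ih d⟩

theorem exists_eq_pvar {A : Fml} {b : Bool} {X : ℕ} {args : List Tm}
    (h : Prefix A (pvar b X args)) :
    ∃ b' X' args', A = pvar b' X' args' := by
  cases A <;> first | exact ⟨_, _, _, rfl⟩ | exact h.elim

theorem not_isForall {A B : Fml} (h : Prefix A B) (hB : ¬ B.IsForall) : ¬ A.IsForall := by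
  cases A <;> cases B <;> simp_all [Prefix, IsForall]

end Prefix

end Fml

open Fml

/-- The rules of `DerB` that keep the subject, acting on pairs (number of first-order binders
the context has been lifted under, type); `F` holds the predicate variables free in the context.
The restriction of `all2E` on ⊥-variables is not recorded. -/
inductive TypeStep (E : Set (Tm × Tm)) (F : Bool → ℕ → Prop) : ℕ × Fml → ℕ × Fml → Prop
  | all1I {j A} : TypeStep E F (j + 1, A) (j, .all1 A)
  | all1E {j A} (u : Tm) : TypeStep E F (j, .all1 A) (j, A.substTop u)
  | all2I {j A} (b X k) : ¬ F b X → TypeStep E F (j, A) (j, .all2 b X k A)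
  | all2E {j b X k A} (G : Fml) : TypeStep E F (j, .all2 b X k A) (j, psubst b X k G 0 A)
  | equiv {j A B} : ArgEquiv E A B → TypeStep E F (j, A) (j, B)

abbrev TypeSteps (E : Set (Tm × Tm)) (F : Bool → ℕ → Prop) : ℕ × Fml → ℕ × Fml → Prop :=
  Relation.ReflTransGen (TypeStep E F)

/-- What a derivation of `t : B` in `liftCtx j Γ` consists of: the rule for the head constructor
of `t`, followed by `TypeStep`s. -/
def Generated (E : Set (Tm × Tm)) (Γ : List Fml) (j : ℕ) : Lam → Fml → Prop
  | .var i, B => ∃ l A, Γ[i]? = some A ∧ TypeSteps E (fvC Γ) (l, A.lift1By 0 l) (j, B)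
  | .app u v, B => ∃ l A B₀, DerB E (liftCtx l Γ) u (.arr A B₀) ∧ DerB E (liftCtx l Γ) v A ∧
      TypeSteps E (fvC Γ) (l, B₀) (j, B)
  | .lam t, B => ∃ l A B₀, DerB E (A :: liftCtx l Γ) t B₀ ∧
      TypeSteps E (fvC Γ) (l, .arr A B₀) (j, B)

section Generation

variable {E : Set (Tm × Tm)} {Γ : List Fml}

theorem Generated.tail {j j' : ℕ} {t : Lam} {B B' : Fml} (h : Generated E Γ j t B)
    (hs : TypeStep E (fvC Γ) (j, B) (j', B')) : Generated E Γ j' t B' := by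
  cases t with
  | var i => obtain ⟨l, A, hA, hc⟩ := h; exact ⟨l, A, hA, hc.tail hs⟩
  | app u v => obtain ⟨l, A, B₀, hu, hv, hc⟩ := h; exact ⟨l, A, B₀, hu, hv, hc.tail hs⟩
  | lam s => obtain ⟨l, A, B₀, hs', hc⟩ := h; exact ⟨l, A, B₀, hs', hc.tail hs⟩

theorem generation {j : ℕ} {t : Lam} {B : Fml} (h : DerB E (liftCtx j Γ) t B) :
    Generated E Γ j t B := by
  generalize hΓ : liftCtx j Γ = Γ' at h
  induction h generalizing j with
  | var _ i A hA =>
    subst hΓ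
    rw [liftCtx, List.getElem?_map] at hA
    obtain ⟨A₀, hA₀, rfl⟩ := Option.map_eq_some_iff.1 hA
    exact ⟨j, A₀, hA₀, .refl⟩
  | lamI hd => subst hΓ; exact ⟨j, _, _, hd, .refl⟩
  | appE hu hv => subst hΓ; exact ⟨j, _, _, hu, hv, .refl⟩
  | all1I _ ih =>
    exact (ih (j := j + 1) (by rw [← hΓ, map_liftCtx])).tail .all1I
  | all1E u _ ih => exact (ih hΓ).tail (.all1E u)
  | all2I b X k _ hfree ih =>
    refine (ih hΓ).tail (.all2I b X k ?_)
    rintro ⟨C, hC, hfv⟩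
    exact hfree _ (hΓ ▸ List.mem_map_of_mem hC) ((fv2_lift1By C 0 j b X).2 hfv)
  | all2E G _ _ ih => exact (ih hΓ).tail (.all2E G)
  | eqr _ heq ih => exact (ih hΓ).tail (.equiv (ArgEquiv.substTop heq _))

theorem generation_zero {t : Lam} {B : Fml} (h : DerB E Γ t B) : Generated E Γ 0 t B :=
  generation (by rwa [liftCtx_zero])

end Generation

inductive IntroClosure (F : Bool → ℕ → Prop) (P : ℕ → Fml → Prop) : ℕ → Fml → Prop
  | core {j B} : P j B → IntroClosure F P j B
  | all1 {j B} : IntroClosure F P (j + 1) B → IntroClosure F P j (.all1 B)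
  | all2 {j B} (b X k) : ¬ F b X → IntroClosure F P j B → IntroClosure F P j (.all2 b X k B)

/-- Eliminating a quantifier introduced over a core acts on the core as a substitution, so these
conditions make `IntroClosure F P` stable under `TypeStep E F`. In `subst` the core sits under
`d` introduced binders and loses one level of lifting. -/
structure StepStable (E : Set (Tm × Tm)) (F : Bool → ℕ → Prop) (P : ℕ → Fml → Prop) : Prop where
  subst : ∀ {j d B} (u : Tm), d ≤ j → P (j + 1) B → P j (B.subst1 (Tm.upN d (Tm.top u)))
  psubst : ∀ {j B b X} (k : ℕ) (G : Fml) (d : ℕ), ¬ F b X → P j B → P j (Fml.psubst b X k G d B)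
  equiv : ∀ {j B B'}, P j B → ArgEquiv E B B' → P j B'
  all1E : ∀ {j A} (u : Tm), P j (.all1 A) → P j (A.substTop u)
  all2E : ∀ {j b X k A} (G : Fml), P j (.all2 b X k A) → P j (Fml.psubst b X k G 0 A)

namespace IntroClosure

variable {F : Bool → ℕ → Prop} {P : ℕ → Fml → Prop}

theorem core_of_not_isForall {j : ℕ} {B : Fml} (h : IntroClosure F P j B) (hB : ¬ B.IsForall) :
    P j B := by
  cases h with
  | core h => exact h
  | all1 => exact (hB trivial).elim
  | all2 => exact (hB trivial).elim

theorem core_of_all2 {j : ℕ} {b : Bool} {X k : ℕ} {B : Fml} (h : IntroClosure F P j (.all2 b X k B))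
    (hP : ¬ P j (.all2 b X k B)) (hB : ¬ B.IsForall) : P j B := by
  cases h with
  | core h => exact (hP h).elim
  | all2 _ _ _ _ h => exact h.core_of_not_isForall hB

variable {E : Set (Tm × Tm)} (hP : StepStable E F P)
include hP

theorem subst {j' : ℕ} {B : Fml} (h : IntroClosure F P j' B) :
    ∀ {j d} (u : Tm), j' = j + 1 → d ≤ j →
      IntroClosure F P j (B.subst1 (Tm.upN d (Tm.top u))) := by
  induction h with
  | core h => intro j d u hj hd; subst hj; exact core (hP.subst u hd h)
  | all1 _ ih =>
    intro j d u hj hd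
    exact all1 (ih (d := d + 1) u (by omega) (by omega))
  | all2 b X k hF _ ih => intro j d u hj hd; exact all2 b X k hF (ih u hj hd)

theorem psubst {j : ℕ} {B : Fml} (h : IntroClosure F P j B) {b : Bool} {X : ℕ} (k : ℕ) (G : Fml)
    (hF : ¬ F b X) : ∀ d, IntroClosure F P j (Fml.psubst b X k G d B) := by
  induction h with
  | core h => exact fun d => core (hP.psubst k G d hF h)
  | all1 _ ih => exact fun d => all1 (ih (d + 1))
  | all2 b' X' k' hF' h ih =>
    intro d
    by_cases hc : b = b' ∧ X = X'
    · simpa [Fml.psubst, hc] using all2 b' X' k' hF' h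
    · simpa [Fml.psubst, hc] using all2 b' X' k' hF' (ih d)

theorem equiv {j : ℕ} {B : Fml} (h : IntroClosure F P j B) : ∀ {B'}, ArgEquiv E B B' →
    IntroClosure F P j B' := by
  induction h with
  | core h => exact fun he => core (hP.equiv h he)
  | all1 _ ih =>
    intro B' he
    cases B' <;> try exact he.elim
    exact all1 (ih he)
  | all2 b X k hF _ ih =>
    intro B' he
    cases B' <;> try exact he.elim
    obtain ⟨rfl, rfl, rfl, he⟩ := he
    exact all2 b X k hF (ih he)

theorem step {p q : ℕ × Fml} (hs : TypeStep E F p q) (h : IntroClosure F P p.1 p.2) :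
    IntroClosure F P q.1 q.2 := by
  cases hs with
  | all1I => exact all1 h
  | all1E u =>
    cases h with
    | core h => exact core (hP.all1E u h)
    | all1 h => exact h.subst hP (d := 0) u rfl (Nat.zero_le _)
  | all2I b X k hF => exact all2 b X k hF h
  | all2E G =>
    cases h with
    | core h => exact core (hP.all2E G h)
    | all2 _ _ _ hF h => exact h.psubst hP _ G hF 0
  | equiv he => exact h.equiv hP he

end IntroClosure

theorem StepStable.qsteps {E : Set (Tm × Tm)} {F : Bool → ℕ → Prop} {P : ℕ → Fml → Prop}
    (hP : StepStable E F P) {l j : ℕ} {A B : Fml} (hs : TypeSteps E F (l, A) (j, B)) (hA : P l A) :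
    IntroClosure F P j B := by
  suffices ∀ {p q}, TypeSteps E F p q → IntroClosure F P p.1 p.2 → IntroClosure F P q.1 q.2 from
    this hs (.core hA)
  intro p q hs h
  induction hs with
  | refl => exact h
  | tail _ hst ih => exact ih.step hP hst

theorem StepStable.var_type {E : Set (Tm × Tm)} {Γ : List Fml} {P : ℕ → Fml → Prop}
    (hP : StepStable E (fvC Γ) P) {i j : ℕ} {A B : Fml} (hA : Γ[i]? = some A)
    (hinit : ∀ l, P l (A.lift1By 0 l)) (h : DerB E (liftCtx j Γ) (.var i) B) :
    IntroClosure (fvC Γ) P j B := by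
  obtain ⟨l, A', hA', hc⟩ := generation h
  obtain rfl : A' = A := Option.some_injective _ (hA'.symm.trans hA)
  exact hP.qsteps hc (hinit l)

/-! An interpretation says at which grades each atom holds; `SuccSat` says that `f`, read as
`g ↦ g + 1`, realizes a formula, and `ChurchSat` that `m̲` realizes `C → M → Y`. Formulas outside
these shapes get the trivial value, which every transfer lemma respects. -/

abbrev Interp : Type := Bool → ℕ → List ℕ → ℕ → Prop

def Interp.update (I : Interp) (b : Bool) (X : ℕ) (P : List ℕ → ℕ → Prop) : Interp :=
  fun b' X' => if b' = b ∧ X' = X then P else I b' X'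

def scons (a : ℕ) (φ : ℕ → ℕ) : ℕ → ℕ
  | 0 => a
  | i + 1 => φ i

def AtomSat (I : Interp) (φ : ℕ → ℕ) : Fml → ℕ → Prop
  | .pvar b X args, g => I b X (args.map (Tm.eval φ)) g
  | _, _ => True

def SuccSat (I : Interp) : (ℕ → ℕ) → Fml → Prop
  | φ, .arr P Q => ∀ g, AtomSat I φ P g → AtomSat I φ Q (g + 1)
  | φ, .all1 A => ∀ a, SuccSat I (scons a φ) A
  | _, _ => True

def ChurchSat (I : Interp) (φ : ℕ → ℕ) (C M Y : Fml) (m : ℕ) : Prop :=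
  AtomSat I φ C 0 → SuccSat I φ M → AtomSat I φ Y m

/-- The predicate that `psubst b X k G` puts in place of `X`, read at the outer valuation `ψ`. -/
def instPred (I : Interp) (ψ : ℕ → ℕ) (k : ℕ) (G : Fml) : List ℕ → ℕ → Prop :=
  fun ds g => AtomSat I (fun i => if i < k then ds.getD i 0 else ψ (i - k)) G g

section Semantics

variable {I : Interp}

theorem eval_up (a : ℕ) (φ : ℕ → ℕ) (σ : ℕ → Tm) :
    (fun i => (Tm.up σ i).eval (scons a φ)) = scons a (fun i => (σ i).eval φ) := by
  funext i
  cases i with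
  | zero => rfl
  | succ i =>
    simp only [Tm.up, Tm.liftBy_eq_subst, Tm.eval_subst]
    congr 1

theorem atomSat_subst1 (φ : ℕ → ℕ) (σ : ℕ → Tm) (A : Fml) (g : ℕ) :
    AtomSat I φ (A.subst1 σ) g ↔ AtomSat I (fun i => (σ i).eval φ) A g := by
  cases A <;> simp [AtomSat, subst1, Function.comp_def, Tm.eval_subst]

theorem succSat_subst1 (φ : ℕ → ℕ) (σ : ℕ → Tm) (A : Fml) :
    SuccSat I φ (A.subst1 σ) ↔ SuccSat I (fun i => (σ i).eval φ) A := by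
  induction A generalizing φ σ with
  | arr P Q => simp [SuccSat, subst1, atomSat_subst1]
  | all1 A ih => simp [SuccSat, subst1, ih, eval_up]
  | pvar | all2 => simp [SuccSat, subst1]

theorem succSat_substTop_of_all1 {φ : ℕ → ℕ} {A : Fml} (h : SuccSat I φ (.all1 A)) (u : Tm) :
    SuccSat I φ (A.substTop u) := by
  have e : (fun i => (Tm.top u i).eval φ) = scons (u.eval φ) φ := by
    funext i; cases i <;> rfl
  exact (succSat_subst1 φ (Tm.top u) A).2 (e ▸ h (u.eval φ))

variable {E : Set (Tm × Tm)}

theorem atomSat_equiv (hE : Adequate E) {A B : Fml} (h : ArgEquiv E A B) (φ : ℕ → ℕ) (g : ℕ) :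
    AtomSat I φ A g ↔ AtomSat I φ B g := by
  cases A <;> cases B <;> try exact h.elim
  case pvar.pvar b X args b' X' args' =>
    obtain ⟨rfl, rfl, h⟩ := h
    have : args.map (Tm.eval φ) = args'.map (Tm.eval φ) := by
      induction h with
      | nil => rfl
      | cons h _ ih => simp [ih, hE.eval_eq h φ]
    simp [AtomSat, this]
  all_goals simp [AtomSat]

theorem succSat_equiv (hE : Adequate E) {A B : Fml} (h : ArgEquiv E A B) (φ : ℕ → ℕ) :
    SuccSat I φ A ↔ SuccSat I φ B := by
  induction A generalizing B φ with
  | arr P Q =>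
    cases B <;> try exact h.elim
    simp [SuccSat, atomSat_equiv hE h.1, atomSat_equiv hE h.2]
  | all1 A ih =>
    cases B <;> try exact h.elim
    simp only [SuccSat]
    exact forall_congr' fun a => ih h _
  | pvar => cases B <;> first | exact h.elim | simp [SuccSat]
  | all2 => cases B <;> first | exact h.elim | simp [SuccSat]

theorem churchSat_equiv (hE : Adequate E) {C C' M M' Y Y' : Fml} (hC : ArgEquiv E C C')
    (hM : ArgEquiv E M M') (hY : ArgEquiv E Y Y') (φ : ℕ → ℕ) (m : ℕ) :
    ChurchSat I φ C M Y m ↔ ChurchSat I φ C' M' Y' m := by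
  simp only [ChurchSat, atomSat_equiv hE hC, succSat_equiv hE hM, atomSat_equiv hE hY]

theorem churchSat_subst1 (φ : ℕ → ℕ) (σ : ℕ → Tm) (C M Y : Fml) (m : ℕ) :
    ChurchSat I φ (C.subst1 σ) (M.subst1 σ) (Y.subst1 σ) m ↔
      ChurchSat I (fun i => (σ i).eval φ) C M Y m := by
  simp only [ChurchSat, atomSat_subst1, succSat_subst1]

theorem atomSat_instArgs (φ : ℕ → ℕ) {ψ : ℕ → ℕ} {d : ℕ} (hφ : ∀ i, φ (i + d) = ψ i)
    (k : ℕ) (G : Fml) (args : List Tm) (g : ℕ) :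
    AtomSat I φ (instArgs k (G.lift1By k d) args) g ↔
      instPred I ψ k G (args.map (Tm.eval φ)) g := by
  rw [instArgs, atomSat_subst1, lift1By_eq_subst1, atomSat_subst1, instPred]
  congr! 2 with i
  by_cases hi : i < k
  · simp only [Tm.shift, hi, if_true, Tm.eval, List.getD_eq_getElem?_getD, List.getElem?_map]
    cases args[i]? <;> rfl
  · simp only [Tm.shift, hi, if_false, Tm.eval, show ¬ i + d < k by omega]
    rw [← hφ]
    congr 1
    omega

theorem atomSat_psubst {φ ψ : ℕ → ℕ} {d : ℕ} (hφ : ∀ i, φ (i + d) = ψ i) (b : Bool) (X k : ℕ)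
    (G A : Fml) (g : ℕ) :
    AtomSat I φ (psubst b X k G d A) g ↔ AtomSat (I.update b X (instPred I ψ k G)) φ A g := by
  cases A with
  | pvar b' X' args =>
    by_cases hc : b = b' ∧ X = X'
    · obtain ⟨rfl, rfl⟩ := hc
      simp only [psubst, and_self, if_true]
      rw [atomSat_instArgs φ hφ]
      simp [AtomSat, Interp.update]
    · have hc' : ¬ (b' = b ∧ X' = X) := fun h => hc ⟨h.1.symm, h.2.symm⟩
      simp [psubst, hc, AtomSat, Interp.update, hc']
  | all2 b' X' k' A => by_cases hc : b = b' ∧ X = X' <;> simp [psubst, hc, AtomSat]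
  | arr | all1 => simp [psubst, AtomSat]

theorem succSat_psubst {φ ψ : ℕ → ℕ} {d : ℕ} (hφ : ∀ i, φ (i + d) = ψ i) (b : Bool) (X k : ℕ)
    (G A : Fml) (h : SuccSat I φ (psubst b X k G d A)) :
    SuccSat (I.update b X (instPred I ψ k G)) φ A := by
  induction A generalizing φ d with
  | arr P Q =>
    simpa [SuccSat, psubst, atomSat_psubst hφ] using h
  | all1 A ih =>
    exact fun a => ih (φ := scons a φ) (d := d + 1) (fun i => hφ i) (h a)
  | pvar | all2 => simp [SuccSat]

theorem churchSat_psubst {φ ψ : ℕ → ℕ} {d : ℕ} (hφ : ∀ i, φ (i + d) = ψ i) (b : Bool) (X k : ℕ)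
    (G C M Y : Fml) (m : ℕ) (h : ChurchSat (I.update b X (instPred I ψ k G)) φ C M Y m) :
    ChurchSat I φ (psubst b X k G d C) (psubst b X k G d M) (psubst b X k G d Y) m := by
  intro hC hM
  exact (atomSat_psubst hφ b X k G Y m).2
    (h ((atomSat_psubst hφ b X k G C 0).1 hC) (succSat_psubst hφ b X k G M hM))

end Semantics

/-- Admissible types of the iterator `f`, `F` being the predicate variables free in the context. -/
inductive IterShape (F : Bool → ℕ → Prop) : Fml → Prop
  | pvar {b X} (args : List Tm) : F b X → IterShape F (.pvar b X args)
  | arr {b X b' X'} (args args' : List Tm) : F b X → F b' X' →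
      IterShape F (.arr (.pvar b X args) (.pvar b' X' args'))
  | all1 {A} : IterShape F A → IterShape F (.all1 A)

namespace IterShape

variable {F : Bool → ℕ → Prop}

theorem subst1 {A : Fml} (h : IterShape F A) (σ : ℕ → Tm) : IterShape F (A.subst1 σ) := by
  induction h generalizing σ with
  | pvar args hF => exact pvar _ hF
  | arr args args' hF hF' => exact arr _ _ hF hF'
  | all1 _ ih => exact all1 (ih _)

theorem lift1By {A : Fml} (h : IterShape F A) (c k : ℕ) : IterShape F (A.lift1By c k) := by
  rw [lift1By_eq_subst1]
  exact h.subst1 _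

theorem equiv {E : Set (Tm × Tm)} {A B : Fml} (h : IterShape F A) (he : ArgEquiv E A B) :
    IterShape F B := by
  induction h generalizing B with
  | pvar args hF =>
    cases B <;> try exact he.elim
    obtain ⟨rfl, rfl, -⟩ := he
    exact pvar _ hF
  | arr args args' hF hF' =>
    cases B <;> try exact he.elim
    rename_i P Q
    cases P <;> try exact he.1.elim
    cases Q <;> try exact he.2.elim
    obtain ⟨⟨rfl, rfl, -⟩, ⟨rfl, rfl, -⟩⟩ := he
    exact arr _ _ hF hF'
  | all1 _ ih =>
    cases B <;> try exact he.elim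
    exact all1 (ih he)

theorem not_fv2 {A : Fml} (h : IterShape F A) {b : Bool} {X : ℕ} (hF : ¬ F b X) :
    ¬ A.fv2 b X := by
  induction h with
  | pvar args hF' => rintro ⟨rfl, rfl⟩; exact hF hF'
  | arr args args' h₁ h₂ => rintro (⟨rfl, rfl⟩ | ⟨rfl, rfl⟩) <;> contradiction
  | all1 _ ih => exact ih

theorem of_prefix {A : Fml} {b X b' X' : _} {args args' : List Tm}
    (hA : Prefix A (.all1 (.arr (.pvar b X args) (.pvar b' X' args'))))
    (hF : ∀ b X, A.fv2 b X → F b X) : IterShape F A := by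
  rcases A with _ | _ | ⟨_ | ⟨_ | _ | _ | _, _ | _ | _ | _⟩ | _ | _⟩ | _ <;>
    first
    | exact hA.elim
    | exact hA.1.elim
    | exact hA.2.elim
    | skip
  · exact pvar _ (hF _ _ ⟨rfl, rfl⟩)
  · exact all1 (pvar _ (hF _ _ ⟨rfl, rfl⟩))
  · exact all1 (arr _ _ (hF _ _ (Or.inl ⟨rfl, rfl⟩)) (hF _ _ (Or.inr ⟨rfl, rfl⟩)))

end IterShape

section Families

variable {E : Set (Tm × Tm)} {F : Bool → ℕ → Prop}

theorem argEquiv_stepStable {C : Fml} (hC : ∀ σ, C.subst1 σ = C) (hfv : ∀ b X, ¬ C.fv2 b X)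
    (hCf : ¬ C.IsForall) : StepStable E F (fun _ B => ArgEquiv E C B) where
  subst _ _ h := hC _ ▸ h.subst1 _
  psubst _ _ _ _ h := by
    rwa [psubst_of_not_fv2 (fun hB => hfv _ _ ((h.fv2_iff _ _).2 hB))]
  equiv h he := h.trans he
  all1E _ h := (h.symm.toPrefix.not_isForall hCf trivial).elim
  all2E _ h := (h.symm.toPrefix.not_isForall hCf trivial).elim

theorem prefix_stepStable (A B : Fml) : StepStable E F (fun _ C => Prefix (.arr A B) C) where
  subst _ _ h := h.trans (Prefix.subst1 _ _)
  psubst _ _ _ _ h := h.trans (Prefix.psubst _ _ _ _ _ _)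
  equiv h he := h.trans he.toPrefix
  all1E _ h := h.elim
  all2E _ h := h.elim

/-- Core types of `m̲`. -/
def ChurchFam (m : ℕ) (_ : ℕ) (B : Fml) : Prop :=
  ∃ C M Y, B = .arr C (.arr M Y) ∧ ∀ I φ, ChurchSat I φ C M Y m

theorem churchFam_stepStable (hE : Adequate E) (m : ℕ) : StepStable E F (ChurchFam m) where
  subst u _ := by
    rintro ⟨C, M, Y, rfl, h⟩
    exact ⟨_, _, _, rfl, fun I φ => (churchSat_subst1 φ _ C M Y m).2 (h I _)⟩
  psubst k G d _ := by
    rintro ⟨C, M, Y, rfl, h⟩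
    exact ⟨_, _, _, rfl, fun I φ => churchSat_psubst (fun _ => rfl) _ _ k G C M Y m (h _ φ)⟩
  equiv := by
    rintro _ _ B' ⟨C, M, Y, rfl, h⟩ he
    cases B' <;> try exact he.elim
    rename_i C' D'
    cases D' <;> try exact he.2.elim
    rename_i M' Y'
    exact ⟨C', M', Y', rfl, fun I φ => (churchSat_equiv hE he.1 he.2.1 he.2.2 φ m).1 (h I φ)⟩
  all1E _ := by rintro ⟨_, _, _, h, -⟩; cases h
  all2E _ := by rintro ⟨_, _, _, h, -⟩; cases h

/-- Core types of `λf (f)ᵐx` when `x : A₁`. -/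
def LamFam (A₁ : Fml) (m j : ℕ) (B : Fml) : Prop := ChurchFam m j (.arr (A₁.lift1By 0 j) B)

theorem lamFam_stepStable (hE : Adequate E) {A₁ : Fml} (hA₁ : ∀ b X, A₁.fv2 b X → F b X)
    (m : ℕ) : StepStable E F (LamFam A₁ m) where
  subst u hd h := by
    have := (churchFam_stepStable (F := F) hE m).subst u hd h
    rwa [subst1, subst1_lift1By_upN _ u (Nat.zero_le _) (by omega), Nat.add_sub_cancel] at this
  psubst k G d hF h := by
    have := (churchFam_stepStable (F := F) hE m).psubst k G d hF h
    rwa [psubst, psubst_of_not_fv2 fun hA => hF (hA₁ _ _ ((fv2_lift1By _ _ _ _ _).1 hA))] at this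
  equiv h he := (churchFam_stepStable (F := F) hE m).equiv h ⟨ArgEquiv.refl _, he⟩
  all1E _ := by rintro ⟨_, _, _, h, -⟩; cases h
  all2E _ := by rintro ⟨_, _, _, h, -⟩; cases h

variable (F) in
/-- Core types of the iterator `f : A₂`. -/
def IterFam (A₂ : Fml) (j : ℕ) (B : Fml) : Prop :=
  IterShape F B ∧ ∀ I φ, SuccSat I φ (A₂.lift1By 0 j) → SuccSat I φ B

theorem iterFam_stepStable (hE : Adequate E) (A₂ : Fml) : StepStable E F (IterFam F A₂) where
  subst u hd h := by
    refine ⟨h.1.subst1 _, fun I φ hA => (succSat_subst1 φ _ _).2 (h.2 I _ ?_)⟩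
    rwa [← succSat_subst1, subst1_lift1By_upN _ u (Nat.zero_le _) (by omega), Nat.add_sub_cancel]
  psubst k G d hF h := by rwa [psubst_of_not_fv2 (h.1.not_fv2 hF)]
  equiv h he := ⟨h.1.equiv he, fun I φ hA => (succSat_equiv hE he φ).1 (h.2 I φ hA)⟩
  all1E u h := by
    obtain ⟨hs, hsat⟩ := h
    cases hs with
    | all1 hs => exact ⟨hs.subst1 _, fun I φ hA => succSat_substTop_of_all1 (hsat I φ hA) u⟩
  all2E _ h := by cases h.1

variable (F) in
/-- Core types of `(f)ᵏx` when `x : A₁` and `f : A₂`. -/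
def BodyFam (A₁ A₂ : Fml) (k j : ℕ) (B : Fml) : Prop :=
  (∃ b X args, B = .pvar b X args ∧ F b X) ∧
    ∀ I φ, ChurchSat I φ (A₁.lift1By 0 j) (A₂.lift1By 0 j) B k

theorem bodyFam_stepStable (hE : Adequate E) (A₁ A₂ : Fml) (k : ℕ) :
    StepStable E F (BodyFam F A₁ A₂ k) where
  subst := by
    rintro j d _ u hd ⟨⟨b, X, args, rfl, hF⟩, h⟩
    refine ⟨⟨b, X, _, rfl, hF⟩, fun I φ => ?_⟩
    have := (churchSat_subst1 (I := I) φ (Tm.upN d (Tm.top u)) _ _ _ k).2 (h I _)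
    rwa [subst1_lift1By_upN _ u (Nat.zero_le _) (by omega),
      subst1_lift1By_upN _ u (Nat.zero_le _) (by omega), Nat.add_sub_cancel] at this
  psubst k G d hF := by
    rintro ⟨⟨b, X, args, rfl, hF'⟩, h⟩
    rw [psubst_of_not_fv2 (by rintro ⟨rfl, rfl⟩; exact hF hF')]
    exact ⟨⟨b, X, args, rfl, hF'⟩, h⟩
  equiv := by
    rintro _ _ B' ⟨⟨b, X, args, rfl, hF⟩, h⟩ he
    cases B' <;> try exact he.elim
    obtain ⟨rfl, rfl, -⟩ := id he
    exact ⟨⟨_, _, _, rfl, hF⟩, fun I φ => (churchSat_equiv hE (.refl _) (.refl _) he φ k).1 (h I φ)⟩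
  all1E _ := by rintro ⟨⟨_, _, _, h, -⟩, -⟩; cases h
  all2E _ := by rintro ⟨⟨_, _, _, h, -⟩, -⟩; cases h

end Families

def natAtom (t : Tm) : Fml := .pvar false 0 [t]

def natStep : Fml := .all1 (.arr (natAtom (.var 0)) (natAtom (.succ (.var 0))))

theorem Nty_eq (t : Tm) :
    Nty t = .all2 false 0 1 (.arr (natAtom .zero) (.arr natStep (natAtom t))) := rfl

theorem subst1_negF_Nty_snum (n : ℕ) (σ : ℕ → Tm) :
    (negF (Nty (snum n))).subst1 σ = negF (Nty (snum n)) := by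
  simp [negF, Nty_eq, natStep, natAtom, botF, subst1, Tm.subst, Tm.up, Tm.subst_snum]

theorem not_fv2_negF_Nty (t : Tm) (b : Bool) (X : ℕ) : ¬ (negF (Nty t)).fv2 b X := by
  simp [negF, Nty_eq, natStep, natAtom, botF, fv2]

section ChurchNumerals

variable {E : Set (Tm × Tm)}

/-- The context formula being closed, the types of `var 0` stay `E`-equal to it. -/
theorem app_var0_inv {C : Fml} (hC : ∀ σ, C.subst1 σ = C) (hfv : ∀ b X, ¬ C.fv2 b X)
    (hCf : ¬ C.IsForall) {t : Lam} {B : Fml} (h : DerB E [C] (.app (.var 0) t) B) :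
    ∃ A B₀, DerB E [C] t A ∧ ArgEquiv E C (.arr A B₀) := by
  have hlift : ∀ l, C.lift1By 0 l = C := fun l => by rw [lift1By_eq_subst1, hC]
  obtain ⟨l, A, B₀, hf, ht, -⟩ := generation_zero h
  have hf' := (argEquiv_stepStable hC hfv hCf).var_type (i := 0) rfl
    (fun l => by rw [hlift]; exact .refl _) hf
  refine ⟨A, B₀, ?_, hf'.core_of_not_isForall (by simp [IsForall])⟩
  simpa [liftCtx, hlift] using ht

theorem churchBody_typing (hE : Adequate E) {Γ : List Fml} {A₂ : Fml} {b : Bool} {X : ℕ}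
    {args : List Tm} (hA₂ : IterShape (fvC (A₂ :: .pvar b X args :: Γ)) A₂) (k : ℕ) :
    ∀ {l B}, DerB E (liftCtx l (A₂ :: .pvar b X args :: Γ)) (churchBody k) B →
      IntroClosure (fvC (A₂ :: .pvar b X args :: Γ))
        (BodyFam (fvC (A₂ :: .pvar b X args :: Γ)) (.pvar b X args) A₂ k) l B := by
  have hx : fvC (A₂ :: .pvar b X args :: Γ) b X :=
    ⟨_, List.mem_cons_of_mem _ List.mem_cons_self, rfl, rfl⟩
  induction k with
  | zero =>
    intro l B h
    exact (bodyFam_stepStable hE _ A₂ 0).var_type (i := 1) rfl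
      (fun _ => ⟨⟨b, X, _, rfl, hx⟩, fun _ _ hC _ => hC⟩) h
  | succ k ih =>
    intro l B h
    obtain ⟨l', A', B', hf, hv, hc⟩ := generation h
    obtain ⟨hshape, hsucc⟩ := ((iterFam_stepStable hE A₂).var_type (i := 0) rfl
      (fun l => ⟨hA₂.lift1By 0 l, fun _ _ h => h⟩) hf).core_of_not_isForall (by simp [IsForall])
    cases hshape with
    | arr _ _ _ hF =>
      have hv' := (ih hv).core_of_not_isForall (by simp [IsForall])
      refine (bodyFam_stepStable hE _ A₂ (k + 1)).qsteps hc ⟨⟨_, _, _, rfl, hF⟩, ?_⟩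
      exact fun I φ hC hM => hsucc I φ hM k (hv'.2 I φ hC hM)

theorem lam_churchBody_realizes (hE : Adequate E) {Γ : List Fml} {b : Bool} {X : ℕ}
    {args : List Tm} {m : ℕ} {B : Fml} {t : Tm}
    (h : DerB E (.pvar b X args :: Γ) (.lam (churchBody m)) B)
    (hB : Prefix B (.arr natStep (natAtom t))) :
    ∃ M Y, B = .arr M Y ∧ ∀ I φ, ChurchSat I φ (.pvar b X args) M Y m := by
  obtain ⟨l, A₂, B₂, hbody, hc⟩ := generation_zero h
  have hBf : ¬ B.IsForall := hB.not_isForall (by simp [IsForall])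
  have hp : Prefix (.arr A₂ B₂) (.arr natStep (natAtom t)) :=
    (((prefix_stepStable A₂ B₂).qsteps hc (.refl _)).core_of_not_isForall hBf).trans hB
  obtain ⟨b₂, X₂, args₂, rfl⟩ := hp.2.exists_eq_pvar
  have hΔ : liftCtx l (.pvar b X args :: Γ) = .pvar b X (args.map (Tm.liftBy 0 l)) :: liftCtx l Γ :=
    rfl
  rw [hΔ] at hbody
  have hA₂ : IterShape (fvC (A₂ :: .pvar b X (args.map (Tm.liftBy 0 l)) :: liftCtx l Γ)) A₂ :=
    .of_prefix hp.1 fun _ _ h => ⟨A₂, List.mem_cons_self, h⟩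
  obtain ⟨-, hin⟩ := (churchBody_typing hE hA₂ m (l := 0)
    (by rwa [liftCtx_zero])).core_of_not_isForall (by simp [IsForall])
  simp only [lift1By_zero] at hin
  have hA₁ : ∀ b' X', (pvar b X args).fv2 b' X' → fvC (.pvar b X args :: Γ) b' X' :=
    fun _ _ h => ⟨_, List.mem_cons_self, h⟩
  obtain ⟨C, M, Y, heq, hMY⟩ := ((lamFam_stepStable hE hA₁ m).qsteps hc
    ⟨_, _, _, rfl, hin⟩).core_of_not_isForall hBf
  obtain ⟨rfl, rfl⟩ := Fml.arr.inj heq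
  exact ⟨M, Y, rfl, by simpa only [lift1By_zero] using hMY⟩

theorem church_realizes (hE : Adequate E) {Γ : List Fml} {m : ℕ} {A : Fml} {t : Tm}
    (h : DerB E Γ (church m) A) (hA : ArgEquiv E A (Nty t)) (I : Interp) (φ : ℕ → ℕ) :
    ChurchSat I φ (natAtom .zero) natStep (natAtom t) m := by
  obtain ⟨l, A₁, B₁, hlam, hc⟩ := generation_zero h
  have hc' : TypeSteps E (fvC Γ) (l, .arr A₁ B₁) (0, Nty t) := hc.tail (.equiv hA)
  rw [Nty_eq] at hc'
  have hp : Prefix (.arr A₁ B₁) (.arr (natAtom .zero) (.arr natStep (natAtom t))) :=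
    ((prefix_stepStable A₁ B₁).qsteps hc' (.refl _)).core_of_all2 (by simp [Prefix])
      (by simp [IsForall])
  obtain ⟨b, X, args, rfl⟩ := hp.1.exists_eq_pvar
  obtain ⟨M, Y, rfl, hMY⟩ := lam_churchBody_realizes hE hlam hp.2
  obtain ⟨C, M', Y', heq, hsat⟩ := ((churchFam_stepStable hE m).qsteps hc'
    ⟨_, _, _, rfl, hMY⟩).core_of_all2 (by simp [ChurchFam]) (by simp [IsForall])
  cases heq
  exact hsat I φ

theorem eval_eq_of_churchSat {t : Tm} {m : ℕ}
    (h : ∀ I φ, ChurchSat I φ (natAtom .zero) natStep (natAtom t) m) (φ : ℕ → ℕ) :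
    t.eval φ = m := by
  have := h (fun _ _ ds g => ds = [g]) φ (by simp [AtomSat, natAtom, Tm.eval])
    (by intro a g hg; simp_all [AtomSat, natAtom, natStep, Tm.eval, scons])
  simpa [AtomSat, natAtom] using this

end ChurchNumerals

/-- If `f : ¬N[sⁿ(0)] ⊢⊥ (f)m̲ : ⊥` in AF2⊥ over an adequate set of equations,
then `n = m`. -/
theorem app_church_bot_typing_forces_eq (E : Set (Tm × Tm)) (hE : Adequate E)
    (n m : ℕ) (h : DerB E [negF (Nty (snum n))] (.app (.var 0) (church m)) botF) :
    n = m := by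
  obtain ⟨A, _, hA, hN⟩ :=
    app_var0_inv (subst1_negF_Nty_snum n) (not_fv2_negF_Nty _) (by simp [negF, IsForall]) h
  have := eval_eq_of_churchSat (church_realizes hE hA hN.1.symm) (fun _ => 0)
  rwa [Tm.eval_snum] at this
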